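/- arXiv:1910.12605 — 6 statements merged into one kernel-verified Lean document; each statement's English description precedes it below -/
import Mathlib

section
/- For every σ > 0, the sequence ℓ_n = (log(n + e − 1))^{σn} satisfies the moderate growth estimate ℓ_{j+k} ≤ e^{σ(j+k)} · ℓ_j · ℓ_k for all j,k ≥ 1. -/
/-!
Put `x = a + e - 1 ≥ e`, so that `log x ≥ 1`. Then
`log (x + b) = log x + log (1 + b/x) ≤ log x + b/x ≤ log x · (1 + b/x)`, and raising to the
power `σa` costs a factor `(1 + b/x)^(σa) ≤ e^(σab/x) ≤ e^(σb)`, because `a ≤ x`. Applying this with the roles of `a` and `b`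
exchanged and multiplying gives the estimate for `log (a + b + e - 1) ^ (σ(a + b))`.
-/

open Real

/-- The sequence `ℓ_n = (log (n + e - 1)) ^ (σ n)`, extended to real arguments. -/
noncomputable def logSeq (σ x : ℝ) : ℝ := log (x + exp 1 - 1) ^ (σ * x)

lemma logSeq_nonneg (σ : ℝ) {x : ℝ} (hx : 0 ≤ x) : 0 ≤ logSeq σ x :=
  rpow_nonneg (log_nonneg (by linarith [add_one_le_exp (1 : ℝ)])) _

lemma log_add_le_log_mul_one_add_div {x b : ℝ} (hx : exp 1 ≤ x) (hb : 0 ≤ b) :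
    log (x + b) ≤ log x * (1 + b / x) := by
  have hx0 : 0 < x := (exp_pos 1).trans_le hx
  have hlogx : 1 ≤ log x := by rwa [le_log_iff_exp_le hx0]
  have hbx : 0 ≤ b / x := div_nonneg hb hx0.le
  have hlog_one_add : log (1 + b / x) ≤ b / x := by
    linarith [log_le_sub_one_of_pos (x := 1 + b / x) (by linarith)]
  calc log (x + b) = log x + log (1 + b / x) := by
        rw [← log_mul hx0.ne' (by positivity), mul_one_add, mul_div_cancel₀ _ hx0.ne']
    _ ≤ log x + log x * (b / x) := by nlinarith
    _ = log x * (1 + b / x) := by ring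

lemma one_add_rpow_le_exp_mul {t c : ℝ} (ht : -1 ≤ t) (hc : 0 ≤ c) :
    (1 + t) ^ c ≤ exp (t * c) := by
  rw [exp_mul]
  exact rpow_le_rpow (by linarith) (by linarith [add_one_le_exp t]) hc

lemma log_add_rpow_le_exp_mul_logSeq {σ a b : ℝ} (hσ : 0 ≤ σ) (ha : 1 ≤ a) (hb : 0 ≤ b) :
    log (a + b + exp 1 - 1) ^ (σ * a) ≤ exp (σ * b) * logSeq σ a := by
  have htwo : 2 ≤ exp 1 := by linarith [add_one_le_exp (1 : ℝ)]
  rw [show a + b + exp 1 - 1 = (a + exp 1 - 1) + b by ring]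
  set x := a + exp 1 - 1
  have hx : exp 1 ≤ x := by linarith
  have hx0 : 0 < x := by linarith
  have hσa : 0 ≤ σ * a := by positivity
  have hlogx : 0 ≤ log x := log_nonneg (by linarith)
  have hexponent : b / x * (σ * a) ≤ σ * b := by
    rw [div_mul_eq_mul_div, div_le_iff₀ hx0]
    nlinarith [mul_nonneg (mul_nonneg hσ hb) (by linarith : (0 : ℝ) ≤ exp 1 - 2)]
  calc log (x + b) ^ (σ * a) ≤ (log x * (1 + b / x)) ^ (σ * a) :=
        rpow_le_rpow (log_nonneg (by linarith)) (log_add_le_log_mul_one_add_div hx hb) hσa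
    _ = logSeq σ a * (1 + b / x) ^ (σ * a) := mul_rpow hlogx (by positivity)
    _ ≤ logSeq σ a * exp (σ * b) := by
        gcongr
        · exact rpow_nonneg hlogx _
        · exact (one_add_rpow_le_exp_mul (by linarith [div_nonneg hb hx0.le]) hσa).trans
            (exp_le_exp.mpr hexponent)
    _ = exp (σ * b) * logSeq σ a := mul_comm _ _

theorem logSeq_add_le {σ a b : ℝ} (hσ : 0 ≤ σ) (ha : 1 ≤ a) (hb : 1 ≤ b) :
    logSeq σ (a + b) ≤ exp (σ * (a + b)) * logSeq σ a * logSeq σ b := by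
  have hlog : 0 < log (a + b + exp 1 - 1) := log_pos (by linarith [add_one_le_exp (1 : ℝ)])
  have hleft := log_add_rpow_le_exp_mul_logSeq hσ ha (by linarith : 0 ≤ b)
  have hright := log_add_rpow_le_exp_mul_logSeq hσ hb (by linarith : 0 ≤ a)
  rw [add_comm b a] at hright
  calc logSeq σ (a + b)
      = log (a + b + exp 1 - 1) ^ (σ * a) * log (a + b + exp 1 - 1) ^ (σ * b) := by
        rw [logSeq, mul_add, rpow_add hlog]
    _ ≤ (exp (σ * b) * logSeq σ a) * (exp (σ * a) * logSeq σ b) :=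
        mul_le_mul hleft hright (rpow_nonneg hlog.le _) 
          (mul_nonneg (exp_pos _).le (logSeq_nonneg σ (by linarith)))
    _ = exp (σ * (a + b)) * logSeq σ a * logSeq σ b := by
        rw [mul_add, exp_add]; ring

theorem log_sequence_moderate_growth (σ : ℝ) (hσ : 0 < σ) :
    ∀ j k : ℕ, 1 ≤ j → 1 ≤ k →
      (Real.log ((j : ℝ) + (k : ℝ) + Real.exp 1 - 1)) ^ (σ * ((j : ℝ) + (k : ℝ))) ≤
        Real.exp (σ * ((j : ℝ) + (k : ℝ))) *
          (Real.log ((j : ℝ) + Real.exp 1 - 1)) ^ (σ * (j : ℝ)) *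
          (Real.log ((k : ℝ) + Real.exp 1 - 1)) ^ (σ * (k : ℝ)) := fun j k hj hk =>
  logSeq_add_le hσ.le (by exact_mod_cast hj) (by exact_mod_cast hk)
end

section
/- Let {m_n} and {ℓ_n} be weight sequences such that lim_{k→∞} (m_k/ℓ_k)^{1/k} = 0. Then for every δ > 0, lim_{t→∞} [sup_{p∈ℕ₀} tᵖ/(ℓ_p·p!)] / [sup_{p∈ℕ₀} (δt)ᵖ/(m_p·p!)] = 0. -/
/-! Since `(m_k/ℓ_k)^{1/k} → 0`, eventually `m_p ≤ (δ/2)^p ℓ_p`, so from some `N` on the term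
`t^p/(ℓ_p p!)` is at most `2^{-p} ≤ ε` times the term `(δt)^p/(m_p p!)` of the denominator.
The finitely many terms with `p < N` are at most `t^N` (weight sequences are `≥ 1`), while the
denominator is at least its `(N+1)`-st term, a multiple of `t^{N+1}`. -/

open Filter Topology Asymptotics Real
open scoped Nat

lemma one_le_of_sq_le_mul {f : ℕ → ℝ} (hpos : ∀ n, 0 < f n) (h0 : f 0 = 1) (h1 : f 1 = 1)
    (hconv : ∀ n, f (n + 1) ^ 2 ≤ f n * f (n + 2)) (n : ℕ) : 1 ≤ f n := by
  have hmono : Monotone f := monotone_nat_of_le_succ fun n => by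
    induction n with
    | zero => rw [h0, h1]
    | succ k ih => nlinarith [hconv k, hpos k, hpos (k + 1)]
  exact h0 ▸ hmono n.zero_le

lemma pow_div_mul_factorial_le_exp {f : ℕ → ℝ} (hf : ∀ n, 1 ≤ f n) {t : ℝ} (ht : 0 ≤ t)
    (p : ℕ) : t ^ p / (f p * p !) ≤ exp t :=
  calc t ^ p / (f p * p !) ≤ t ^ p / p ! :=
        div_le_div_of_nonneg_left (by positivity) (by positivity) (le_mul_of_one_le_left
          (by positivity) (hf p))
    _ ≤ exp t := pow_div_factorial_le_exp _ ht p

lemma bddAbove_range_pow_div_mul_factorial {f : ℕ → ℝ} (hf : ∀ n, 1 ≤ f n) {t : ℝ}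
    (ht : 0 ≤ t) : BddAbove (Set.range fun p => t ^ p / (f p * p !)) :=
  ⟨exp t, Set.forall_mem_range.2 (pow_div_mul_factorial_le_exp hf ht)⟩

lemma eventually_le_pow_mul_of_tendsto_rpow {ℓ m : ℕ → ℝ} (hℓ : ∀ n, 0 < ℓ n)
    (hm : ∀ n, 0 ≤ m n)
    (hlim : Tendsto (fun k : ℕ => (m k / ℓ k) ^ ((1 : ℝ) / k)) atTop (𝓝 0)) {r : ℝ}
    (hr : 0 < r) : ∀ᶠ k in atTop, m k ≤ r ^ k * ℓ k := by
  filter_upwards [hlim.eventually (gt_mem_nhds hr), eventually_ne_atTop 0] with k hk hk0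
  have hq : 0 ≤ m k / ℓ k := div_nonneg (hm k) (hℓ k).le
  have : m k / ℓ k < r ^ k := by
    rw [one_div] at hk
    simpa only [rpow_inv_natCast_pow hq hk0] using pow_lt_pow_left₀ hk (by positivity) hk0
  exact ((div_lt_iff₀ (hℓ k)).1 this).le

lemma pow_div_mul_factorial_le_half_pow_mul {x y δ t : ℝ} {p : ℕ} (hy : 0 < y) (hδ : 0 < δ)
    (ht : 0 ≤ t) (hyx : y ≤ (δ / 2) ^ p * x) :
    t ^ p / (x * p !) ≤ (1 / 2) ^ p * ((δ * t) ^ p / (y * p !)) := by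
  calc t ^ p / (x * p !) ≤ t ^ p / (y / (δ / 2) ^ p * p !) := by
        gcongr
        exact (div_le_iff₀' (by positivity)).2 hyx
    _ = (1 / 2) ^ p * ((δ * t) ^ p / (y * p !)) := by
        field_simp
        ring

lemma eventually_pow_le_mul_pow_succ {a : ℝ} (ha : 0 < a) (N : ℕ) :
    ∀ᶠ t in atTop, t ^ N ≤ a * t ^ (N + 1) := by
  filter_upwards [eventually_ge_atTop a⁻¹] with t ht
  have ht0 : 0 ≤ t := (inv_pos.2 ha).le.trans ht
  calc t ^ N = 1 * t ^ N := (one_mul _).symm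
    _ ≤ (a * t) * t ^ N := by gcongr; exact (inv_le_iff_one_le_mul₀' ha).1 ht
    _ = a * t ^ (N + 1) := by ring

theorem isLittleO_iSup_pow_div_mul_factorial {ℓ m : ℕ → ℝ} (hℓ : ∀ n, 1 ≤ ℓ n)
    (hm : ∀ n, 1 ≤ m n) {δ : ℝ} (hδ : 0 < δ)
    (htail : ∀ᶠ k in atTop, m k ≤ (δ / 2) ^ k * ℓ k) :
    (fun t : ℝ => ⨆ p : ℕ, t ^ p / (ℓ p * p !)) =o[atTop]
      fun t => ⨆ p : ℕ, (δ * t) ^ p / (m p * p !) := by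
  refine isLittleO_iff.2 fun ε hε => ?_
  obtain ⟨N, hN⟩ := eventually_atTop.1 <| htail.and <|
    (tendsto_pow_atTop_nhds_zero_of_lt_one (by norm_num) (by norm_num : (1 : ℝ) / 2 < 1)).eventually
      (ge_mem_nhds hε)
  have hc : 0 < ε * (δ ^ (N + 1) / (m (N + 1) * (N + 1)!)) := by
    have := hm (N + 1); positivity
  filter_upwards [eventually_pow_le_mul_pow_succ hc N, eventually_ge_atTop 1] with t hpow ht1
  have ht0 : 0 ≤ t := zero_le_one.trans ht1
  set M := ⨆ p : ℕ, (δ * t) ^ p / (m p * p !)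
  have hM : ∀ p, (δ * t) ^ p / (m p * p !) ≤ M :=
    le_ciSup (bddAbove_range_pow_div_mul_factorial hm (mul_nonneg hδ.le ht0))
  have hm0 : ∀ p, 0 < m p := fun p => zero_lt_one.trans_le (hm p)
  rw [norm_of_nonneg (Real.iSup_nonneg fun p => by have := hℓ p; positivity),
    norm_of_nonneg ((by have := hm0 0; positivity : (0 : ℝ) ≤ _).trans (hM 0))]
  refine ciSup_le fun p => ?_
  rcases lt_or_ge p N with hp | hp
  · calc t ^ p / (ℓ p * p !) ≤ t ^ p :=
          div_le_self (by positivity) (one_le_mul_of_one_le_of_one_le (hℓ p)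
            (by exact_mod_cast p.factorial_pos))
      _ ≤ t ^ N := pow_le_pow_right₀ ht1 hp.le
      _ ≤ ε * (δ ^ (N + 1) / (m (N + 1) * (N + 1)!)) * t ^ (N + 1) := hpow
      _ = ε * ((δ * t) ^ (N + 1) / (m (N + 1) * (N + 1)!)) := by ring
      _ ≤ ε * M := by gcongr; exact hM _
  · obtain ⟨hmℓ, hhalf⟩ := hN p hp
    calc t ^ p / (ℓ p * p !) ≤ (1 / 2) ^ p * ((δ * t) ^ p / (m p * p !)) :=
          pow_div_mul_factorial_le_half_pow_mul (hm0 p) hδ ht0 hmℓ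
      _ ≤ ε * M := by have := hm0 p; gcongr; exact hM p

theorem associated_functions_quotient_tendsto_zero_general (ℓ m : ℕ → ℝ)
    (hℓpos : ∀ n, 0 < ℓ n) (hℓ0 : ℓ 0 = 1) (hℓ1 : ℓ 1 = 1)
    (hℓconv : ∀ n : ℕ, (ℓ (n + 1)) ^ 2 ≤ ℓ n * ℓ (n + 2))
    (hmpos : ∀ n, 0 < m n) (hm0 : m 0 = 1) (hm1 : m 1 = 1)
    (hmconv : ∀ n : ℕ, (m (n + 1)) ^ 2 ≤ m n * m (n + 2))
    (hlim : Filter.Tendsto (fun k : ℕ => (m k / ℓ k) ^ ((1 : ℝ) / (k : ℝ)))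
      Filter.atTop (nhds 0)) :
    ∀ δ : ℝ, 0 < δ →
      Filter.Tendsto
        (fun t : ℝ => (⨆ p : ℕ, t ^ p / (ℓ p * (Nat.factorial p : ℝ))) /
          (⨆ p : ℕ, (δ * t) ^ p / (m p * (Nat.factorial p : ℝ))))
        Filter.atTop (nhds 0) := by
  intro δ hδ
  have hℓ := one_le_of_sq_le_mul hℓpos hℓ0 hℓ1 hℓconv
  have hm := one_le_of_sq_le_mul hmpos hm0 hm1 hmconv
  have htail := eventually_le_pow_mul_of_tendsto_rpow hℓpos (fun n => (hmpos n).le) hlim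
    (half_pos hδ)
  exact (isLittleO_iSup_pow_div_mul_factorial hℓ hm hδ htail).tendsto_div_nhds_zero

theorem associated_functions_quotient_tendsto_zero (ℓ m : ℕ → ℝ) (Hℓ Hm : ℝ)
    (hℓpos : ∀ n, 0 < ℓ n) (hℓ0 : ℓ 0 = 1) (hℓ1 : ℓ 1 = 1)
    (hℓconv : ∀ n : ℕ, (ℓ (n + 1)) ^ 2 ≤ ℓ n * ℓ (n + 2))
    (hHℓ : 1 < Hℓ)
    (hℓmod : ∀ j k : ℕ, ℓ (j + k) ≤ Hℓ ^ (j + k) * ℓ j * ℓ k)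
    (hmpos : ∀ n, 0 < m n) (hm0 : m 0 = 1) (hm1 : m 1 = 1)
    (hmconv : ∀ n : ℕ, (m (n + 1)) ^ 2 ≤ m n * m (n + 2))
    (hHm : 1 < Hm)
    (hmmod : ∀ j k : ℕ, m (j + k) ≤ Hm ^ (j + k) * m j * m k)
    (hlim : Filter.Tendsto (fun k : ℕ => (m k / ℓ k) ^ ((1 : ℝ) / (k : ℝ)))
      Filter.atTop (nhds 0)) :
    ∀ δ : ℝ, 0 < δ →
      Filter.Tendsto
        (fun t : ℝ => (⨆ p : ℕ, t ^ p / (ℓ p * (Nat.factorial p : ℝ))) /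
          (⨆ p : ℕ, (δ * t) ^ p / (m p * (Nat.factorial p : ℝ))))
        Filter.atTop (nhds 0) :=
  associated_functions_quotient_tendsto_zero_general ℓ m hℓpos hℓ0 hℓ1 hℓconv hmpos hm0 hm1 hmconv
    hlim
end

section
/- Let n ∈ ℕ and k₁,…,k_n be non-negative integers with k₁ + 2k₂ + … + n·k_n = n, and set k = k₁ + … + k_n. If {m_j} is a sequence of positive reals with m_0 = m_1 = 1 and m_j² ≤ m_{j-1}·m_{j+1} for all j ≥ 1, then m_k · ∏_{ℓ=1}^{n} (m_ℓ)^{k_ℓ} ≤ m_n. -/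
/-!
Log-convexity says that the ratios `m (j + 1) / m j` increase, hence `m (a + c) / m a` increases
in `a`. Regard `(k₁, …, kₙ)` as a multiset of `k` parts with sum `n`, and add the parts one at a
time. Adding a part `ℓ` to `K` parts of total `N ≥ K` multiplies the left-hand side by
`m (K + 1) / m K * m ℓ` and the right-hand side by
`m (N + ℓ) / m N = m (N + 1) / m N * (m (N + ℓ) / m (N + 1))`; the factors compare one by one,
the second because `m ℓ = m (1 + (ℓ - 1)) / m 1`.
-/

section LogConvex

variable {m : ℕ → ℝ}

theorem monotone_div_succ_of_sq_le (hpos : ∀ j, 0 < m j)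
    (hconv : ∀ j, m (j + 1) ^ 2 ≤ m j * m (j + 2)) :
    Monotone fun j => m (j + 1) / m j :=
  monotone_nat_of_le_succ fun j => by
    rw [div_le_div_iff₀ (hpos j) (hpos (j + 1))]
    nlinarith [hconv j]

theorem div_le_div_of_sq_le (hpos : ∀ j, 0 < m j)
    (hconv : ∀ j, m (j + 1) ^ 2 ≤ m j * m (j + 2)) {a b : ℕ} (hab : a ≤ b) (c : ℕ) :
    m (a + c) / m a ≤ m (b + c) / m b := by
  induction c with
  | zero => simp [div_self (hpos a).ne', div_self (hpos b).ne']
  | succ c ih =>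
    have hratio : m (a + c + 1) / m (a + c) ≤ m (b + c + 1) / m (b + c) :=
      monotone_div_succ_of_sq_le hpos hconv (show a + c ≤ b + c by omega)
    calc m (a + (c + 1)) / m a = m (a + c) / m a * (m (a + c + 1) / m (a + c)) :=
          (div_mul_div_cancel₀' (hpos _).ne' _ _).symm
      _ ≤ m (b + c) / m b * (m (b + c + 1) / m (b + c)) :=
          mul_le_mul ih hratio (div_pos (hpos _) (hpos _)).le (div_pos (hpos _) (hpos _)).le
      _ = m (b + (c + 1)) / m b := div_mul_div_cancel₀' (hpos _).ne' _ _

theorem succ_mul_mul_le_add_of_mul_le (hpos : ∀ j, 0 < m j) (h1 : m 1 = 1)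
    (hconv : ∀ j, m (j + 1) ^ 2 ≤ m j * m (j + 2)) {K N ℓ : ℕ} {P : ℝ} (hKN : K ≤ N)
    (hℓ : 1 ≤ ℓ) (hP : 0 ≤ P) (h : m K * P ≤ m N) :
    m (K + 1) * (m ℓ * P) ≤ m (N + ℓ) := by
  have hsucc : m (K + 1) / m K ≤ m (N + 1) / m N := div_le_div_of_sq_le hpos hconv hKN 1
  have hpart : m ℓ ≤ m (N + ℓ) / m (N + 1) := by
    simpa [h1, show 1 + (ℓ - 1) = ℓ by omega, show N + 1 + (ℓ - 1) = N + ℓ by omega] using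
      div_le_div_of_sq_le hpos hconv (show 1 ≤ N + 1 by omega) (ℓ - 1)
  have := hpos K
  have := hpos ℓ
  have := hpos N
  have := hpos (N + 1)
  have := hpos (N + ℓ)
  calc m (K + 1) * (m ℓ * P) = m (K + 1) / m K * m ℓ * (m K * P) := by field_simp
    _ ≤ m (N + 1) / m N * (m (N + ℓ) / m (N + 1)) * m N := by gcongr
    _ = m (N + ℓ) := by field_simp

theorem mul_prod_map_le_sum (hpos : ∀ j, 0 < m j) (h1 : m 1 = 1)
    (hconv : ∀ j, m (j + 1) ^ 2 ≤ m j * m (j + 2)) (s : Multiset ℕ) (hs : ∀ ℓ ∈ s, 1 ≤ ℓ) :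
    m (Multiset.card s) * (s.map m).prod ≤ m s.sum := by
  induction s using Multiset.induction_on with
  | empty => simp
  | cons ℓ s ih =>
    have hs' : ∀ x ∈ s, 1 ≤ x := fun x hx => hs x (Multiset.mem_cons_of_mem hx)
    have hcard : Multiset.card s ≤ s.sum := by
      simpa using Multiset.card_nsmul_le_sum hs'
    have hprod : 0 ≤ (s.map m).prod := Multiset.prod_nonneg fun x hx => by
      obtain ⟨j, -, rfl⟩ := Multiset.mem_map.1 hx
      exact (hpos j).le
    rw [Multiset.card_cons, Multiset.map_cons, Multiset.prod_cons, Multiset.sum_cons, add_comm ℓ]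
    exact succ_mul_mul_le_add_of_mul_le hpos h1 hconv hcard (hs ℓ (Multiset.mem_cons_self ℓ s))
      hprod (ih hs')

end LogConvex

theorem faa_di_bruno_weight_estimate_general (n : ℕ) (k : Fin n → ℕ)
    (hk : ∑ i : Fin n, ((i : ℕ) + 1) * k i = n)
    (m : ℕ → ℝ)
    (hpos : ∀ j, 0 < m j) (h1 : m 1 = 1)
    (hconv : ∀ j : ℕ, (m (j + 1)) ^ 2 ≤ m j * m (j + 2)) :
    m (∑ i : Fin n, k i) * ∏ i : Fin n, (m ((i : ℕ) + 1)) ^ (k i) ≤ m n := by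
  set parts : Multiset ℕ := ∑ i : Fin n, k i • {(i : ℕ) + 1}
  have hcard : Multiset.card parts = ∑ i, k i := by simp [parts, Multiset.card_sum]
  have hprod : (parts.map m).prod = ∏ i : Fin n, m ((i : ℕ) + 1) ^ k i := by
    rw [← Multiset.coe_mapAddMonoidHom, map_sum, Multiset.prod_sum]
    simp [Multiset.map_nsmul, Multiset.prod_nsmul]
  have hsum : parts.sum = n := by
    simpa [parts, Multiset.sum_sum, Multiset.sum_nsmul, mul_comm] using hk
  have hparts : ∀ ℓ ∈ parts, 1 ≤ ℓ := by simp +contextual [parts]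
  simpa [hcard, hprod, hsum] using mul_prod_map_le_sum hpos h1 hconv parts hparts

theorem faa_di_bruno_weight_estimate (n : ℕ) (hn : 1 ≤ n) (k : Fin n → ℕ)
    (hk : ∑ i : Fin n, ((i : ℕ) + 1) * k i = n)
    (m : ℕ → ℝ)
    (hpos : ∀ j, 0 < m j) (h0 : m 0 = 1) (h1 : m 1 = 1)
    (hconv : ∀ j : ℕ, (m (j + 1)) ^ 2 ≤ m j * m (j + 2)) :
    m (∑ i : Fin n, k i) * ∏ i : Fin n, (m ((i : ℕ) + 1)) ^ (k i) ≤ m n :=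
  faa_di_bruno_weight_estimate_general n k hk m hpos h1 hconv
end

section
/- For every positive integer n and real R > 0, the sum of k!/(k₁!·k₂!·…·k_n!)·R^k, taken over all tuples (k₁,…,k_n) of non-negative integers with k₁ + 2k₂ + … + n·k_n = n and with k = k₁ + … + k_n, equals R·(1+R)^{n−1}. -/
/-!
With `q = r (X + X² + ⋯ + Xⁿ)`, the multinomial theorem shows that the sum is the coefficient of
`Xⁿ` in `S = ∑_{m ≤ n} q^m`. Since `(1 - X)(1 - q) = 1 - (1 + r) X + r X^{n+1}` and
`S (1 - q) = 1 - q^{n+1}`, the coefficients `c_m` of `S` satisfy `c₀ = 1`, `c₁ = r` and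
`c_{m+1} = (1 + r) c_m` for `m < n`, whence `c_n = r (1 + r)^{n-1}`.
-/

open Polynomial Finset

theorem Nat.cast_multinomial_eq_div {K α : Type*} [Field K] [CharZero K]
    (s : Finset α) (f : α → ℕ) :
    (Nat.multinomial s f : K) = (∑ i ∈ s, f i).factorial / ∏ i ∈ s, ((f i).factorial : K) := by
  rw [eq_div_iff (prod_ne_zero_iff.2 fun i _ => Nat.cast_ne_zero.2 (Nat.factorial_ne_zero _)),
    ← Nat.cast_prod, ← Nat.cast_mul, mul_comm, Nat.multinomial_spec]

-- `k i` is the multiplicity of the part `i + 1`.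
def partitionSize {n : ℕ} (k : Fin n → ℕ) : ℕ := ∑ i : Fin n, ((i : ℕ) + 1) * k i

theorem le_partitionSize {n : ℕ} (k : Fin n → ℕ) (i : Fin n) : k i ≤ partitionSize k :=
  calc k i ≤ ((i : ℕ) + 1) * k i := Nat.le_mul_of_pos_left _ i.succ_pos
    _ ≤ partitionSize k := single_le_sum (f := fun j : Fin n => ((j : ℕ) + 1) * k j)
        (fun _ _ => Nat.zero_le _) (mem_univ i)

theorem sum_le_partitionSize {n : ℕ} (k : Fin n → ℕ) : ∑ i, k i ≤ partitionSize k :=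
  sum_le_sum fun i _ => Nat.le_mul_of_pos_left _ i.succ_pos

theorem sum_range_sum_piAntidiag_filter_partitionSize {M : Type*} [AddCommMonoid M] (n : ℕ)
    (g : (Fin n → ℕ) → M) :
    ∑ m ∈ range (n + 1), ∑ k ∈ (piAntidiag univ m).filter (partitionSize · = n), g k
      = ∑ k ∈ (Fintype.piFinset fun _ => range (n + 1)).filter (partitionSize · = n), g k := by
  rw [← sum_fiberwise_of_maps_to (g := fun k : Fin n → ℕ => ∑ i, k i) (t := range (n + 1))]
  · refine sum_congr rfl fun m _ => sum_congr ?_ fun _ _ => rfl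
    ext k
    simp only [mem_filter, mem_piAntidiag, Fintype.mem_piFinset, mem_range, mem_univ]
    have := le_partitionSize k
    grind
  · intro k hk
    exact mem_range.2 (Nat.lt_succ_of_le ((sum_le_partitionSize k).trans_eq (mem_filter.1 hk).2))

section CommSemiring

variable {A : Type*} [CommSemiring A] (n : ℕ) (r : A)

noncomputable def partPoly : A[X] := ∑ i : Fin n, C r * X ^ ((i : ℕ) + 1)

noncomputable def partGeomSum : A[X] := ∑ m ∈ range (n + 1), partPoly n r ^ m

theorem coeff_partPoly_pow (m d : ℕ) :
    (partPoly n r ^ m).coeff d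
      = ∑ k ∈ (piAntidiag (univ : Finset (Fin n)) m).filter (partitionSize · = d),
          (Nat.multinomial univ k : A) * r ^ m := by
  rw [partPoly, sum_pow_eq_sum_piAntidiag, finsetSum_coeff, sum_filter]
  refine sum_congr rfl fun k hk => ?_
  have hprod : ∏ i : Fin n, (C r * X ^ ((i : ℕ) + 1)) ^ k i = C (r ^ m) * X ^ partitionSize k := by
    simp_rw [mul_pow, ← C_pow, ← pow_mul, prod_mul_distrib, ← map_prod, prod_pow_eq_pow_sum,
      (mem_piAntidiag.1 hk).1, partitionSize]
  rw [hprod, ← C_eq_natCast, ← mul_assoc, ← C_mul, coeff_C_mul_X_pow]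
  exact if_congr eq_comm rfl rfl

theorem coeff_partGeomSum_eq_sum :
    (partGeomSum n r).coeff n
      = ∑ k ∈ (Fintype.piFinset fun _ : Fin n => range (n + 1)).filter (partitionSize · = n),
          (Nat.multinomial univ k : A) * r ^ (∑ i, k i) := by
  rw [← sum_range_sum_piAntidiag_filter_partitionSize, partGeomSum, finsetSum_coeff]
  refine sum_congr rfl fun m _ => ?_
  rw [coeff_partPoly_pow]
  exact sum_congr rfl fun k hk => by rw [(mem_piAntidiag.1 (mem_filter.1 hk).1).1]

end CommSemiring

section CommRing

variable {A : Type*} [CommRing A] (n : ℕ) (r : A)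

theorem partPoly_eq_mul_geom_sum : partPoly n r = C r * X * ∑ i ∈ range n, X ^ i := by
  rw [partPoly, Fin.sum_univ_eq_sum_range (fun i => C r * X ^ (i + 1)), mul_sum]
  exact sum_congr rfl fun i _ => by ring

theorem X_pow_dvd_partPoly_pow (m : ℕ) : X ^ m ∣ partPoly n r ^ m :=
  pow_dvd_pow_of_dvd ⟨C r * ∑ i ∈ range n, X ^ i, by rw [partPoly_eq_mul_geom_sum]; ring⟩ m

theorem partGeomSum_mul :
    partGeomSum n r * (1 - C (1 + r) * X + C r * X ^ (n + 1))
      = (1 - X) * (1 - partPoly n r ^ (n + 1)) := by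
  have hgeom : partGeomSum n r * (1 - partPoly n r) = 1 - partPoly n r ^ (n + 1) := by
    rw [partGeomSum, mul_comm, mul_neg_geom_sum]
  have hX : (1 - X) * ∑ i ∈ range n, (X : A[X]) ^ i = 1 - X ^ n := mul_neg_geom_sum X n
  have hfactor : 1 - C (1 + r) * X + C r * X ^ (n + 1) = (1 - X) * (1 - partPoly n r) := by
    rw [partPoly_eq_mul_geom_sum, map_add, map_one]
    linear_combination (C r * X) * hX
  rw [hfactor, mul_left_comm, hgeom]

theorem coeff_partGeomSum_zero : (partGeomSum n r).coeff 0 = 1 := by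
  have h := congrArg (coeff · 0) (partGeomSum_mul n r)
  have hq : (partPoly n r ^ (n + 1)).coeff 0 = 0 :=
    X_pow_dvd_iff.1 (X_pow_dvd_partPoly_pow n r (n + 1)) 0 n.succ_pos
  simpa [mul_coeff_zero, hq] using h

theorem coeff_partGeomSum_succ {j : ℕ} (hj : j + 1 ≤ n) :
    (partGeomSum n r).coeff (j + 1)
      = (1 + r) * (partGeomSum n r).coeff j - if j = 0 then 1 else 0 := by
  have h := congrArg (coeff · (j + 1)) (partGeomSum_mul n r)
  have hq : ((1 - X) * partPoly n r ^ (n + 1)).coeff (j + 1) = 0 :=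
    X_pow_dvd_iff.1 (dvd_mul_of_dvd_right (X_pow_dvd_partPoly_pow n r (n + 1)) _) _ (by omega)
  rw [show ∀ S : A[X], S * (1 - C (1 + r) * X + C r * X ^ (n + 1))
      = S - C (1 + r) * (S * X) + C r * S * X ^ (n + 1) from fun S => by ring,
    mul_sub, mul_one] at h
  simp only [coeff_add, coeff_sub, coeff_C_mul, coeff_mul_X, coeff_mul_X_pow', hq,
    if_neg (show ¬ n + 1 ≤ j + 1 by omega), coeff_one, coeff_X, if_neg j.succ_ne_zero,
    show 1 = j + 1 ↔ j = 0 by omega] at h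
  linear_combination h

theorem coeff_partGeomSum {j : ℕ} (hj : j + 1 ≤ n) :
    (partGeomSum n r).coeff (j + 1) = r * (1 + r) ^ j := by
  induction j with
  | zero => simp [coeff_partGeomSum_succ n r hj, coeff_partGeomSum_zero]
  | succ j ih =>
    rw [coeff_partGeomSum_succ n r hj, ih (by omega), if_neg j.succ_ne_zero]
    ring

end CommRing

theorem multinomial_partition_identity_general (n : ℕ) (hn : 1 ≤ n) (R : ℝ) :
    ∑ k ∈ (Fintype.piFinset fun _ : Fin n => Finset.range (n + 1)).filter
        (fun k : Fin n → ℕ => ∑ i : Fin n, ((i : ℕ) + 1) * k i = n),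
      (Nat.factorial (∑ i : Fin n, k i) : ℝ) /
          (∏ i : Fin n, (Nat.factorial (k i) : ℝ)) * R ^ (∑ i : Fin n, k i)
      = R * (1 + R) ^ (n - 1) := by
  obtain ⟨j, rfl⟩ : ∃ j, n = j + 1 := ⟨n - 1, by omega⟩
  calc _ = ∑ k ∈ (Fintype.piFinset fun _ : Fin (j + 1) => range (j + 2)).filter
          (partitionSize · = j + 1), (Nat.multinomial univ k : ℝ) * R ^ (∑ i, k i) :=
        sum_congr rfl fun k _ => by rw [Nat.cast_multinomial_eq_div]
    _ = (partGeomSum (j + 1) R).coeff (j + 1) := (coeff_partGeomSum_eq_sum _ R).symm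
    _ = R * (1 + R) ^ (j + 1 - 1) := coeff_partGeomSum _ R le_rfl

theorem multinomial_partition_identity (n : ℕ) (hn : 1 ≤ n) (R : ℝ) (hR : 0 < R) :
    ∑ k ∈ (Fintype.piFinset fun _ : Fin n => Finset.range (n + 1)).filter
        (fun k : Fin n → ℕ => ∑ i : Fin n, ((i : ℕ) + 1) * k i = n),
      (Nat.factorial (∑ i : Fin n, k i) : ℝ) /
          (∏ i : Fin n, (Nat.factorial (k i) : ℝ)) * R ^ (∑ i : Fin n, k i)
      = R * (1 + R) ^ (n - 1) :=
  multinomial_partition_identity_general n hn R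
end

section
/- Let {m_n} be a weight sequence. Let {a_ξ}_{ξ∈ℤ^N} and {b_ξ}_{ξ∈ℤ^N} be families of complex numbers such that there exist C, C', δ > 0 with |b_ξ| ≤ C·inf_{n} (m_n·n!)/(δⁿ(1+|ξ|)ⁿ) for all ξ, and |a_ξ| ≤ C'·sup_{n} εⁿ(1+|ξ|)ⁿ/(m_n·n!) for ε = δ/H (H the moderate growth constant). Then Σ_{ξ∈ℤ^N} |a_ξ|·|b_ξ| < ∞. -/
/-! Put `t = 1 + ‖ξ‖` and pair the `n`-th term of the supremum with a term of the infimum.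
If `t ≤ n²`, the `n`-th term of the infimum leaves `H⁻ⁿ ≤ H^(-√t)`, which decays faster than
any power of `t`. If `n² < t`, the `(n + 2q)`-th term together with moderate growth
`m (n + p) ≤ H^(n + p) m n m p` leaves `O((n + 2q)^(2q) / t^(2q)) = O(t^(-q))`.
For `q = 2N` this gives `|a ξ| |b ξ| = O((1 + ‖ξ‖)^(-2N)) = O(∏ᵢ (1 + |ξᵢ|)^(-2))`,
which is summable over `ℤ^N`. -/

open Nat

theorem Nat.factorial_add_le_mul_pow (n k : ℕ) : (n + k)! ≤ n ! * (n + k) ^ k := by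
  have h := Nat.factorial_mul_descFactorial (Nat.le_add_left k n)
  rw [Nat.add_sub_cancel] at h
  rw [← h]
  exact Nat.mul_le_mul_left _ (Nat.descFactorial_le_pow _ _)

theorem natCast_pow_le_mul_pow {H : ℝ} (hH : 1 < H) (k n : ℕ) :
    (n : ℝ) ^ k ≤ k ! / Real.log H ^ k * H ^ n := by
  have hlog := Real.log_pos hH
  have h := Real.pow_div_factorial_le_exp (n * Real.log H) (by positivity) k
  rw [Real.exp_nat_mul, Real.exp_log (by linarith), mul_pow, div_le_iff₀ (by positivity)] at h
  rw [div_mul_eq_mul_div, le_div_iff₀ (by positivity)]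
  linarith

section WeightSequence

variable {m : ℕ → ℝ} {H δ t : ℝ}

theorem bddBelow_range_weight_div (hpos : ∀ n, 0 < m n) (hδ : 0 < δ) (ht : 0 < t) :
    BddBelow (Set.range fun n => m n * n ! / (δ ^ n * t ^ n)) :=
  ⟨0, by rintro _ ⟨n, rfl⟩; have := hpos n; positivity⟩

theorem div_weight_mul_iInf_le_inv_pow (hpos : ∀ n, 0 < m n) (hH : 0 < H) (hδ : 0 < δ)
    (ht : 0 < t) (n : ℕ) :
    (δ / H) ^ n * t ^ n / (m n * n !) * ⨅ k, m k * k ! / (δ ^ k * t ^ k) ≤ (H ^ n)⁻¹ := by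
  have := hpos n
  calc _ ≤ (δ / H) ^ n * t ^ n / (m n * n !) * (m n * n ! / (δ ^ n * t ^ n)) := by
        gcongr
        exact ciInf_le (bddBelow_range_weight_div hpos hδ ht) n
    _ = (H ^ n)⁻¹ := by
        rw [div_pow]
        field_simp

theorem div_weight_mul_iInf_le_of_moderate (hpos : ∀ n, 0 < m n)
    (hmod : ∀ j k : ℕ, m (j + k) ≤ H ^ (j + k) * m j * m k) (hH : 0 < H) (hδ : 0 < δ)
    (ht : 0 < t) (n p : ℕ) :
    (δ / H) ^ n * t ^ n / (m n * n !) * ⨅ k, m k * k ! / (δ ^ k * t ^ k) ≤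
      H ^ p * m p * (n + p) ^ p / (δ ^ p * t ^ p) := by
  have := hpos n
  have hfact : ((n + p)! : ℝ) ≤ n ! * (n + p) ^ p := by
    exact_mod_cast Nat.factorial_add_le_mul_pow n p
  calc _ ≤ (δ / H) ^ n * t ^ n / (m n * n !) *
        (m (n + p) * (n + p)! / (δ ^ (n + p) * t ^ (n + p))) := by
        gcongr
        exact ciInf_le (bddBelow_range_weight_div hpos hδ ht) (n + p)
    _ ≤ (δ / H) ^ n * t ^ n / (m n * n !) *
        (H ^ (n + p) * m n * m p * (n ! * (n + p) ^ p) / (δ ^ (n + p) * t ^ (n + p))) := by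
        have := hpos p
        gcongr
        exact hmod n p
    _ = H ^ p * m p * (n + p) ^ p / (δ ^ p * t ^ p) := by
        rw [div_pow]
        field_simp
        ring

theorem iSup_div_weight_mul_iInf_le (hpos : ∀ n, 0 < m n)
    (hmod : ∀ j k : ℕ, m (j + k) ≤ H ^ (j + k) * m j * m k) (hH : 1 < H) (hδ : 0 < δ) (q : ℕ) :
    ∃ K > 0, ∀ t, 1 ≤ t →
      (⨆ n, (δ / H) ^ n * t ^ n / (m n * n !)) * (⨅ k, m k * k ! / (δ ^ k * t ^ k)) ≤
        K / t ^ q := by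
  have hH0 : 0 < H := one_pos.trans hH
  have hlog := Real.log_pos hH
  have hm := hpos (2 * q)
  set K₁ := ((2 * q)! : ℝ) / Real.log H ^ (2 * q)
  set K₂ := H ^ (2 * q) * m (2 * q) * (2 * q + 1) ^ (2 * q) / δ ^ (2 * q)
  refine ⟨K₁ + K₂, by positivity, fun t ht => ?_⟩
  have ht0 : 0 < t := one_pos.trans_le ht
  have hI : 0 ≤ ⨅ k, m k * k ! / (δ ^ k * t ^ k) :=
    Real.iInf_nonneg fun k => by have := hpos k; positivity
  rw [Real.iSup_mul_of_nonneg hI]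
  refine Real.iSup_le (fun n => ?_) (by positivity)
  rcases le_or_gt t ((n : ℝ) ^ 2) with hn | hn
  · calc _ ≤ (H ^ n)⁻¹ := div_weight_mul_iInf_le_inv_pow hpos hH0 hδ ht0 n
      _ ≤ K₁ / t ^ q := by
        rw [← one_div, div_le_div_iff₀ (by positivity) (by positivity), one_mul]
        calc t ^ q ≤ ((n : ℝ) ^ 2) ^ q := by gcongr
          _ = (n : ℝ) ^ (2 * q) := by rw [pow_mul]
          _ ≤ K₁ * H ^ n := natCast_pow_le_mul_pow hH _ _
      _ ≤ (K₁ + K₂) / t ^ q := by gcongr; exact le_add_of_nonneg_right (by positivity)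
  · have hsq : ((n : ℝ) + (2 * q : ℕ)) ^ 2 ≤ (2 * q + 1) ^ 2 * t := by
      have : (n : ℝ) ≤ n ^ 2 := by exact_mod_cast Nat.le_self_pow two_ne_zero n
      have hqn : (q : ℝ) * n ≤ q * t := by gcongr; linarith
      have hqq : (q : ℝ) ^ 2 ≤ q ^ 2 * t := le_mul_of_one_le_right (by positivity) ht
      push_cast
      nlinarith
    calc _ ≤ H ^ (2 * q) * m (2 * q) * (n + (2 * q : ℕ)) ^ (2 * q) / (δ ^ (2 * q) * t ^ (2 * q)) :=
          div_weight_mul_iInf_le_of_moderate hpos hmod hH0 hδ ht0 n (2 * q)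
      _ ≤ H ^ (2 * q) * m (2 * q) * ((2 * q + 1) ^ 2 * t) ^ q / (δ ^ (2 * q) * t ^ (2 * q)) := by
          gcongr
          rw [pow_mul]
          gcongr
      _ = K₂ / t ^ q := by
          rw [mul_pow, ← pow_mul]
          simp only [K₂]
          field_simp
          ring
      _ ≤ (K₁ + K₂) / t ^ q := by gcongr; exact le_add_of_nonneg_left (by positivity)

end WeightSequence

theorem summable_prod_pi_of_nonneg {ι : Type*} [Fintype ι] {α : ι → Type*} {f : ∀ i, α i → ℝ}
    (hf : ∀ i a, 0 ≤ f i a) (hs : ∀ i, Summable (f i)) :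
    Summable fun x : ∀ i, α i => ∏ i, f i (x i) := by
  classical
  refine summable_of_sum_le (c := ∏ i, ∑' a, f i a)
    (fun x => Finset.prod_nonneg fun i _ => hf i (x i)) fun s => ?_
  calc ∑ x ∈ s, ∏ i, f i (x i)
      ≤ ∑ x ∈ Fintype.piFinset fun i => s.image (· i), ∏ i, f i (x i) :=
        Finset.sum_le_sum_of_subset_of_nonneg
          (fun x hx => Fintype.mem_piFinset.2 fun i => Finset.mem_image_of_mem _ hx)
          fun x _ _ => Finset.prod_nonneg fun i _ => hf i (x i)
    _ = ∏ i, ∑ a ∈ s.image (· i), f i a := (Finset.prod_univ_sum _ _).symm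
    _ ≤ ∏ i, ∑' a, f i a :=
        Finset.prod_le_prod (fun i _ => Finset.sum_nonneg fun a _ => hf i a)
          fun i _ => (hs i).sum_le_tsum _ fun a _ => hf i a

theorem Int.summable_one_div_one_add_norm_sq : Summable fun n : ℤ => 1 / (1 + ‖n‖) ^ 2 := by
  refine Summable.of_norm_bounded_eventually (Real.summable_one_div_int_pow.2 one_lt_two) ?_
  filter_upwards [(Set.finite_singleton (0 : ℤ)).eventually_cofinite_notMem] with n hn
  have hn : (n : ℝ) ≠ 0 := by simpa using hn
  rw [Real.norm_of_nonneg (by positivity), Int.norm_eq_abs, ← sq_abs (n : ℝ)]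
  gcongr
  linarith

theorem one_div_one_add_norm_pow_le_prod {ι E : Type*} [Fintype ι] [SeminormedAddGroup E]
    (ξ : ι → E) (k : ℕ) :
    1 / (1 + ‖ξ‖) ^ (k * Fintype.card ι) ≤ ∏ i, 1 / (1 + ‖ξ i‖) ^ k := by
  have hle : ∏ i, (1 + ‖ξ i‖) ^ k ≤ (1 + ‖ξ‖) ^ (k * Fintype.card ι) := by
    calc ∏ i, (1 + ‖ξ i‖) ^ k ≤ ∏ _i : ι, (1 + ‖ξ‖) ^ k :=
          Finset.prod_le_prod (fun i _ => by positivity)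
            fun i _ => by gcongr; exact norm_le_pi_norm ξ i
      _ = (1 + ‖ξ‖) ^ (k * Fintype.card ι) := by
          rw [Finset.prod_const, Finset.card_univ, pow_mul]
  rw [Finset.prod_div_distrib, Finset.prod_const_one]
  gcongr

theorem fourier_pairing_summable_general (N : ℕ)
    (m : ℕ → ℝ) (H : ℝ)
    (hpos : ∀ n, 0 < m n)
    (hH : 1 < H)
    (hmod : ∀ j k : ℕ, m (j + k) ≤ H ^ (j + k) * m j * m k)
    (a b : (Fin N → ℤ) → ℂ) (C C' δ : ℝ) (hC : 0 < C) (hC' : 0 < C') (hδ : 0 < δ)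
    (hb : ∀ ξ : Fin N → ℤ, ‖b ξ‖ ≤
      C * ⨅ n : ℕ, (m n * (Nat.factorial n : ℝ)) / (δ ^ n * (1 + ‖ξ‖) ^ n))
    (ha : ∀ ξ : Fin N → ℤ, ‖a ξ‖ ≤
      C' * ⨆ n : ℕ, (δ / H) ^ n * (1 + ‖ξ‖) ^ n / (m n * (Nat.factorial n : ℝ))) :
    Summable fun ξ : Fin N → ℤ => ‖a ξ‖ * ‖b ξ‖ := by
  obtain ⟨K, hK, hSI⟩ := iSup_div_weight_mul_iInf_le hpos hmod hH hδ (2 * N)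
  have hmajorant := summable_prod_pi_of_nonneg (fun (_ : Fin N) n => by positivity)
    fun _ => Int.summable_one_div_one_add_norm_sq
  refine .of_nonneg_of_le (fun ξ => by positivity) (fun ξ => ?_) (hmajorant.mul_left (C * C' * K))
  have hprod := one_div_one_add_norm_pow_le_prod ξ 2
  rw [Fintype.card_fin] at hprod
  have hSI := hSI (1 + ‖ξ‖) (le_add_of_nonneg_right (norm_nonneg ξ))
  set S := ⨆ n : ℕ, (δ / H) ^ n * (1 + ‖ξ‖) ^ n / (m n * n !)
  set I := ⨅ n : ℕ, m n * n ! / (δ ^ n * (1 + ‖ξ‖) ^ n)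
  calc ‖a ξ‖ * ‖b ξ‖ ≤ C' * S * (C * I) :=
        mul_le_mul (ha ξ) (hb ξ) (norm_nonneg _) ((norm_nonneg _).trans (ha ξ))
    _ = C * C' * (S * I) := by ring
    _ ≤ C * C' * (K * (1 / (1 + ‖ξ‖) ^ (2 * N))) := by rw [mul_one_div]; gcongr
    _ ≤ C * C' * K * ∏ i, 1 / (1 + ‖ξ i‖) ^ 2 := by rw [← mul_assoc]; gcongr

theorem fourier_pairing_summable (N : ℕ) (hN : 1 ≤ N)
    (m : ℕ → ℝ) (H : ℝ)
    (hpos : ∀ n, 0 < m n) (h0 : m 0 = 1) (h1 : m 1 = 1)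
    (hconv : ∀ n : ℕ, (m (n + 1)) ^ 2 ≤ m n * m (n + 2))
    (hH : 1 < H)
    (hmod : ∀ j k : ℕ, m (j + k) ≤ H ^ (j + k) * m j * m k)
    (a b : (Fin N → ℤ) → ℂ) (C C' δ : ℝ) (hC : 0 < C) (hC' : 0 < C') (hδ : 0 < δ)
    (hb : ∀ ξ : Fin N → ℤ, ‖b ξ‖ ≤
      C * ⨅ n : ℕ, (m n * (Nat.factorial n : ℝ)) / (δ ^ n * (1 + ‖ξ‖) ^ n))
    (ha : ∀ ξ : Fin N → ℤ, ‖a ξ‖ ≤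
      C' * ⨆ n : ℕ, (δ / H) ^ n * (1 + ‖ξ‖) ^ n / (m n * (Nat.factorial n : ℝ))) :
    Summable fun ξ : Fin N → ℤ => ‖a ξ‖ * ‖b ξ‖ :=
  fourier_pairing_summable_general N m H hpos hH hmod a b C C' δ hC hC' hδ hb ha
end

section
/- Let {m_n} be a weight sequence with moderate growth constant H. Suppose {b_ξ}_{ξ∈ℤ^N} are complex numbers with |b_ξ| ≤ C·inf_{n∈ℕ₀} (m_n·n!)/(δⁿ·(1+|ξ|)ⁿ) for some C, δ > 0 and all ξ. Then for every multi-index α ∈ ℕ₀^N, Σ_{ξ∈ℤ^N} |ξ|^{|α|}·|b_ξ| ≤ C₁·h₁^{|α|}·m_{|α|}·|α|! where C₁, h₁ > 0 depend only on C, δ, N, and the constants of the weight sequence. -/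
/-!
Testing the infimum in the hypothesis at `n = |α| + 2N` gives
`|ξ|^|α| |b_ξ| ≤ C m_{|α|+2N} (|α|+2N)! δ^{-(|α|+2N)} (1 + |ξ|)^{-2N}`,
and `(1 + |ξ|)^{-2N}` is summable over `ℤ^N` because it is dominated by the product
`∏ᵢ (1 + |ξᵢ|)^{-2}`. Moderate growth together with `(j + k)! ≤ 2^(j+k) j! k!` then
splits the shift by `2N` off `m_{|α|+2N} (|α|+2N)!`, at the price of the geometric factor
`(2H/δ)^|α|`.
-/

open Finset
open scoped Nat

lemma summable_pi_prod_of_nonneg {ι α : Type*} [Fintype ι] {f : α → ℝ} (hf₀ : 0 ≤ f)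
    (hf : Summable f) : Summable fun x : ι → α => ∏ i, f (x i) := by
  classical
  -- every finite sum is bounded by the sum over a box, which factors
  refine summable_of_sum_le (fun x => prod_nonneg fun i _ => hf₀ _)
    (c := (∑' a, f a) ^ Fintype.card ι) fun s => ?_
  set t := s.biUnion fun x => univ.image x
  have hs : s ⊆ Fintype.piFinset fun _ => t := fun x hx =>
    Fintype.mem_piFinset.2 fun i => mem_biUnion.2 ⟨x, hx, mem_image_of_mem x (mem_univ i)⟩
  calc ∑ x ∈ s, ∏ i, f (x i)
      ≤ ∑ x ∈ Fintype.piFinset fun _ => t, ∏ i, f (x i) :=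
        sum_le_sum_of_subset_of_nonneg hs fun x _ _ => prod_nonneg fun i _ => hf₀ _
    _ = ∏ _i : ι, ∑ a ∈ t, f a := (prod_univ_sum (fun _ => t) fun _ => f).symm
    _ ≤ ∏ _i : ι, ∑' a, f a :=
        prod_le_prod (fun _ _ => sum_nonneg fun a _ => hf₀ a) fun _ _ =>
          hf.sum_le_tsum t fun a _ => hf₀ a
    _ = (∑' a, f a) ^ Fintype.card ι := prod_const _

lemma summable_inv_one_add_norm_sq_int : Summable fun n : ℤ => ((1 + ‖n‖) ^ 2)⁻¹ := by
  have hnat : Summable fun n : ℕ => ((1 + (n : ℝ)) ^ 2)⁻¹ := by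
    refine ((summable_nat_add_iff 1).2 (Real.summable_one_div_nat_pow.2 one_lt_two)).congr
      fun n => ?_
    push_cast
    rw [one_div, add_comm]
  refine .of_nat_of_neg (hnat.congr fun n => ?_) (hnat.congr fun n => ?_) <;> simp

lemma summable_inv_one_add_norm_pow {ι : Type*} [Fintype ι] :
    Summable fun ξ : ι → ℤ => ((1 + ‖ξ‖) ^ (2 * Fintype.card ι))⁻¹ := by
  refine (summable_pi_prod_of_nonneg (fun n => by positivity)
    summable_inv_one_add_norm_sq_int).of_nonneg_of_le (fun ξ => by positivity) fun ξ => ?_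
  rw [pow_mul, ← inv_pow, ← card_univ, ← prod_const]
  exact prod_le_prod (fun _ _ => by positivity) fun i _ =>
    inv_anti₀ (by positivity) (by gcongr; exact norm_le_pi_norm ξ i)

lemma Nat.factorial_add_le_two_pow (j k : ℕ) : (j + k)! ≤ 2 ^ (j + k) * j ! * k ! := by
  rw [← Nat.add_choose_mul_factorial_mul_factorial, mul_assoc, mul_assoc]
  exact Nat.mul_le_mul_right _ (Nat.choose_le_two_pow _ _)

lemma mul_factorial_add_div_pow_le {m : ℕ → ℝ} {H δ : ℝ} (hm : ∀ n, 0 ≤ m n)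
    (hmod : ∀ j k : ℕ, m (j + k) ≤ H ^ (j + k) * m j * m k) (hδ : 0 < δ) (j k : ℕ) :
    m (j + k) * (j + k)! / δ ^ (j + k) ≤
      ((2 * H / δ) ^ j * m j * j !) * ((2 * H / δ) ^ k * m k * k !) := by
  have hfact : ((j + k)! : ℝ) ≤ 2 ^ (j + k) * j ! * k ! := by
    exact_mod_cast Nat.factorial_add_le_two_pow j k
  rw [div_le_iff₀ (by positivity)]
  calc m (j + k) * (j + k)! ≤ (H ^ (j + k) * m j * m k) * (2 ^ (j + k) * j ! * k !) :=
        mul_le_mul (hmod j k) hfact (by positivity) ((hm _).trans (hmod j k))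
    _ = _ := by rw [div_pow, div_pow]; field_simp; ring

lemma pow_mul_le_of_le_mul_iInf {m : ℕ → ℝ} {s x C δ : ℝ} (hm : ∀ n, 0 ≤ m n)
    (hs : 0 ≤ s) (hC : 0 ≤ C) (hδ : 0 < δ)
    (hx : x ≤ C * ⨅ n : ℕ, m n * n ! / (δ ^ n * (1 + s) ^ n)) (k p : ℕ) :
    s ^ k * x ≤ C * (m (k + p) * (k + p)! / δ ^ (k + p)) * ((1 + s) ^ p)⁻¹ := by
  have hx' : x ≤ C * (m (k + p) * (k + p)! / (δ ^ (k + p) * (1 + s) ^ (k + p))) :=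
    have hbdd : BddBelow (Set.range fun n : ℕ => m n * n ! / (δ ^ n * (1 + s) ^ n)) :=
      ⟨0, by rintro _ ⟨n, rfl⟩; have := hm n; positivity⟩
    hx.trans (mul_le_mul_of_nonneg_left (ciInf_le hbdd (k + p)) hC)
  have hd : 0 ≤ C * (m (k + p) * (k + p)! / (δ ^ (k + p) * (1 + s) ^ (k + p))) := by
    have := hm (k + p); positivity
  calc s ^ k * x
      ≤ (1 + s) ^ k * (C * (m (k + p) * (k + p)! / (δ ^ (k + p) * (1 + s) ^ (k + p)))) :=
        (mul_le_mul_of_nonneg_left hx' (by positivity)).trans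
          (mul_le_mul_of_nonneg_right (by gcongr; linarith) hd)
    _ = _ := by rw [pow_add (1 + s)]; field_simp

theorem fourier_coefficients_derivative_bound_general (N : ℕ)
    (m : ℕ → ℝ) (H : ℝ)
    (hpos : ∀ n, 0 < m n)
    (hH : 1 < H)
    (hmod : ∀ j k : ℕ, m (j + k) ≤ H ^ (j + k) * m j * m k)
    (b : (Fin N → ℤ) → ℂ) (C δ : ℝ) (hC : 0 < C) (hδ : 0 < δ)
    (hb : ∀ ξ : Fin N → ℤ, ‖b ξ‖ ≤
      C * ⨅ n : ℕ, (m n * (Nat.factorial n : ℝ)) / (δ ^ n * (1 + ‖ξ‖) ^ n)) :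
    ∃ C₁ h₁ : ℝ, 0 < C₁ ∧ 0 < h₁ ∧
      ∀ α : Fin N → ℕ,
        (Summable fun ξ : Fin N → ℤ => ‖ξ‖ ^ (∑ i, α i) * ‖b ξ‖) ∧
        (∑' ξ : Fin N → ℤ, ‖ξ‖ ^ (∑ i, α i) * ‖b ξ‖) ≤
          C₁ * h₁ ^ (∑ i, α i) * m (∑ i, α i) * (Nat.factorial (∑ i, α i) : ℝ) := by
  have hm : ∀ n, 0 ≤ m n := fun n => (hpos n).le
  have hg : Summable fun ξ : Fin N → ℤ => ((1 + ‖ξ‖) ^ (2 * N))⁻¹ := by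
    simpa using summable_inv_one_add_norm_pow (ι := Fin N)
  set S := ∑' ξ : Fin N → ℤ, ((1 + ‖ξ‖) ^ (2 * N))⁻¹
  have hS : 0 < S := hg.tsum_pos (fun _ => by positivity) 0 (by simp)
  have hm2N := hpos (2 * N)
  refine ⟨C * ((2 * H / δ) ^ (2 * N) * m (2 * N) * (2 * N)!) * S, 2 * H / δ,
    by positivity, by have : 0 < H := one_pos.trans hH; positivity, fun α => ?_⟩
  set k := ∑ i, α i
  have hpt := fun ξ => pow_mul_le_of_le_mul_iInf hm (norm_nonneg ξ) hC.le hδ (hb ξ) k (2 * N)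
  have hsum := (hg.mul_left _).of_nonneg_of_le (fun ξ => by positivity) hpt
  refine ⟨hsum, (hsum.tsum_le_tsum hpt (hg.mul_left _)).trans ?_⟩
  rw [tsum_mul_left]
  calc C * (m (k + 2 * N) * (k + 2 * N)! / δ ^ (k + 2 * N)) * S
      ≤ C * (((2 * H / δ) ^ k * m k * k !) * ((2 * H / δ) ^ (2 * N) * m (2 * N) * (2 * N)!)) *
          S := by
        gcongr
        exact mul_factorial_add_div_pow_le hm hmod hδ k (2 * N)
    _ = _ := by ring

theorem fourier_coefficients_derivative_bound (N : ℕ) (hN : 1 ≤ N)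
    (m : ℕ → ℝ) (H : ℝ)
    (hpos : ∀ n, 0 < m n) (h0 : m 0 = 1) (h1 : m 1 = 1)
    (hconv : ∀ n : ℕ, (m (n + 1)) ^ 2 ≤ m n * m (n + 2))
    (hH : 1 < H)
    (hmod : ∀ j k : ℕ, m (j + k) ≤ H ^ (j + k) * m j * m k)
    (b : (Fin N → ℤ) → ℂ) (C δ : ℝ) (hC : 0 < C) (hδ : 0 < δ)
    (hb : ∀ ξ : Fin N → ℤ, ‖b ξ‖ ≤
      C * ⨅ n : ℕ, (m n * (Nat.factorial n : ℝ)) / (δ ^ n * (1 + ‖ξ‖) ^ n)) :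
    ∃ C₁ h₁ : ℝ, 0 < C₁ ∧ 0 < h₁ ∧
      ∀ α : Fin N → ℕ,
        (Summable fun ξ : Fin N → ℤ => ‖ξ‖ ^ (∑ i, α i) * ‖b ξ‖) ∧
        (∑' ξ : Fin N → ℤ, ‖ξ‖ ^ (∑ i, α i) * ‖b ξ‖) ≤
          C₁ * h₁ ^ (∑ i, α i) * m (∑ i, α i) * (Nat.factorial (∑ i, α i) : ℝ) :=
  fourier_coefficients_derivative_bound_general N m H hpos hH hmod b C δ hC hδ hb
end
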